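/- If H is a k-uniform hypergraph on n vertices with m edges and ρ is the largest eigenvalue of its signless Laplacian Q, then BE(H) ≤ √ρ + √((n−1)(km − ρ)). -/

import Mathlib

open Matrix BigOperators Finset

/-- Incidence matrix of a hypergraph on vertex set `Fin n` with edges `E : Fin m → Finset (Fin n)`. -/
noncomputable def inc {n m : ℕ} (E : Fin m → Finset (Fin n)) : Matrix (Fin n) (Fin m) ℝ :=
  fun v e => if v ∈ E e then 1 else 0

/-- Adjacency matrix of the line multigraph: `(e,f)`-entry is `|E e ∩ E f|` for `e ≠ f`, `0` on diagonal. -/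
noncomputable def lineAdj {n m : ℕ} (E : Fin m → Finset (Fin n)) : Matrix (Fin m) (Fin m) ℝ :=
  fun e f => if e = f then 0 else ((E e ∩ E f).card : ℝ)

/-- Adjacency matrix of the clique multigraph: `(u,v)`-entry is the number of edges containing both. -/
noncomputable def cliqueAdj {n m : ℕ} (E : Fin m → Finset (Fin n)) : Matrix (Fin n) (Fin n) ℝ :=
  fun u v => if u = v then 0 else ((univ.filter fun e => u ∈ E e ∧ v ∈ E e).card : ℝ)

/-- Degree of a vertex: number of edges containing it. -/
def deg {n m : ℕ} (E : Fin m → Finset (Fin n)) (v : Fin n) : ℕ :=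
  (univ.filter fun e => v ∈ E e).card

/-- Cauchy–Schwarz on all terms but the `j`-th. -/
theorem Real.sum_sqrt_le_sqrt_add_sqrt_card_sub_one_mul {ι : Type*} [Fintype ι] [DecidableEq ι]
    (f : ι → ℝ) (hf : ∀ i, 0 ≤ f i) (j : ι) :
    ∑ i, √(f i) ≤ √(f j) + √((Fintype.card ι - 1) * (∑ i, f i - f j)) := by
  rw [← add_sum_erase _ _ (mem_univ j), ← add_sum_erase _ f (mem_univ j), add_sub_cancel_left,
    ← Finset.card_univ, ← cast_card_erase_of_mem (mem_univ j)]
  gcongr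
  apply Real.le_sqrt_of_sq_le
  calc (∑ i ∈ univ.erase j, √(f i)) ^ 2
      ≤ #(univ.erase j) * ∑ i ∈ univ.erase j, √(f i) ^ 2 := sq_sum_le_card_mul_sum_sq
    _ = #(univ.erase j) * ∑ i ∈ univ.erase j, f i := by
      simp only [Real.sq_sqrt (hf _)]

theorem trace_inc_mul_transpose {n m : ℕ} (E : Fin m → Finset (Fin n)) :
    (inc E * (inc E)ᵀ).trace = ∑ e, ((E e).card : ℝ) := by
  rw [trace_mul_comm]
  refine sum_congr rfl fun e _ => ?_
  simp [mul_apply, inc]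

theorem stmt9_general {n m k : ℕ} (E : Fin m → Finset (Fin n))
    (hk : ∀ e, (E e).card = k)
    (hQ : (inc E * (inc E)ᵀ).IsHermitian)
    (ρ : ℝ) (hρ : IsGreatest (Set.range hQ.eigenvalues) ρ) :
    (∑ i, Real.sqrt (hQ.eigenvalues i)) ≤
      Real.sqrt ρ + Real.sqrt ((n - 1) * (k * m - ρ)) := by
  obtain ⟨j, rfl⟩ := hρ.1
  have hpsd : (inc E * (inc E)ᵀ).PosSemidef := by
    simpa using posSemidef_self_mul_conjTranspose (inc E)
  have htrace : ∑ i, hQ.eigenvalues i = k * m := by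
    have := hQ.trace_eq_sum_eigenvalues
    simp only [RCLike.ofReal_real_eq_id, id, trace_inc_mul_transpose] at this
    simp [← this, hk, mul_comm]
  simpa [htrace] using
    Real.sum_sqrt_le_sqrt_add_sqrt_card_sub_one_mul hQ.eigenvalues hpsd.eigenvalues_nonneg j

/-- `BE(H) ≤ √ρ + √((n-1)(km - ρ))` where `ρ` is the signless Laplacian
spectral radius. -/
theorem stmt9 {n m k : ℕ} (E : Fin m → Finset (Fin n))
    (hk2 : 2 ≤ k) (hk : ∀ e, (E e).card = k)
    (hQ : (inc E * (inc E)ᵀ).IsHermitian)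
    (ρ : ℝ) (hρ : IsGreatest (Set.range hQ.eigenvalues) ρ) :
    (∑ i, Real.sqrt (hQ.eigenvalues i)) ≤
      Real.sqrt ρ + Real.sqrt ((n - 1) * (k * m - ρ)) :=
  stmt9_general E hk hQ ρ hρ
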